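/- Let 𝒜 be a finite category with objects a_1, …, a_m, and for each n ∈ ℕ let c_n be the number of chains x_0 →^{φ_1} x_1 → ⋯ →^{φ_n} x_n of n composable arrows in 𝒜 with no φ_k an identity (i.e., the number of nondegenerate n-simplices of the nerve of 𝒜). Then the formal power series f_𝒜(t) = ∑_{n∈ℕ} c_n tⁿ ∈ ℚ⟦t⟧ is rational: det(I − (Z_𝒜 − I)·t) · f_𝒜(t) = s(adj(I − (Z_𝒜 − I)·t)) in ℚ⟦t⟧, and det(I − (Z_𝒜 − I)·t) is a polynomial with constant term 1, hence nonzero. -/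

import Mathlib

open CategoryTheory Matrix Polynomial

/-- The sum of all entries of a square matrix. -/
def matS {ι R : Type*} [Fintype ι] [CommRing R] (M : Matrix ι ι R) : R :=
  ∑ i, ∑ j, M i j

/-- A chain `x = x_0 → x_1 → ⋯ → x_n = y` of `n` composable arrows in a category
structure on `Fin m`, none of which is an identity arrow (i.e. a nondegenerate
`n`-simplex of the nerve from `x` to `y`). -/
structure NondegChain (m : ℕ) [Category (Fin m)] (n : ℕ) (x y : Fin m) where
  obj : Fin (n + 1) → Fin m
  hom : ∀ k : Fin n, obj k.castSucc ⟶ obj k.succ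
  src : obj 0 = x
  tgt : obj (Fin.last n) = y
  nondeg : ∀ k : Fin n, ¬ ∃ h : obj k.castSucc = obj k.succ, hom k = eqToHom h

/-!
A nondegenerate chain of length `n + 1` from `x` to `y` is a non-identity arrow `x ⟶ k`
followed by a nondegenerate chain of length `n` from `k` to `y`. Since `Z_𝒜 - I` counts
non-identity arrows, the number of nondegenerate `n`-chains from `x` to `y` is the `(x, y)`
entry of `(Z_𝒜 - I)ⁿ`, so `f_𝒜 = s(G)` for `G = ∑ₙ (Z_𝒜 - I)ⁿ tⁿ`. In `ℚ⟦t⟧`, `G` is a right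
inverse of `A = I - (Z_𝒜 - I) t`, hence `adj A = adj A · A · G = det A · G`, and applying `s`
gives the identity. Finally `det A` evaluates to `det I = 1` at `t = 0`.
-/

open scoped PowerSeries

section PowerSeries

variable {ι R : Type*} [Fintype ι] [CommRing R]

lemma matS_smul (r : R) (M : Matrix ι ι R) : matS (r • M) = r * matS M := by
  simp [matS, Finset.mul_sum]

lemma map_matS {S : Type*} [CommRing S] (f : R →+* S) (M : Matrix ι ι R) :
    f (matS M) = matS (M.map f) := by
  simp [matS, map_sum]

variable [DecidableEq ι]

def matrixGeomSeries (N : Matrix ι ι R) : Matrix ι ι R⟦X⟧ :=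
  of fun i j => PowerSeries.mk fun n => (N ^ n) i j

lemma matS_matrixGeomSeries (N : Matrix ι ι R) :
    matS (matrixGeomSeries N) = PowerSeries.mk fun n => matS (N ^ n) := by
  ext n
  simp [matS, matrixGeomSeries, map_sum]

theorem Matrix.adjugate_eq_det_smul_of_mul_eq_one {A B : Matrix ι ι R} (h : A * B = 1) :
    A.adjugate = A.det • B := by
  rw [← smul_one_mul, ← adjugate_mul, Matrix.mul_assoc, h, Matrix.mul_one]

lemma one_sub_X_smul_mul_matrixGeomSeries (N : Matrix ι ι R) :
    (1 - (PowerSeries.X : R⟦X⟧) • N.map PowerSeries.C) * matrixGeomSeries N = 1 := by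
  ext i j n
  rcases n with _ | n
  · by_cases hij : i = j <;> simp [sub_mul, matrixGeomSeries, one_apply, hij]
  · by_cases hij : i = j <;> simp [sub_mul, matrixGeomSeries, one_apply, hij, mul_apply,
      pow_succ', mul_assoc, PowerSeries.coeff_succ_X_mul, PowerSeries.coeff_C_mul, map_sum]

lemma coeff_zero_det_one_sub_X_smul (M : Matrix ι ι R[X]) :
    ((1 - (X : R[X]) • M).det).coeff 0 = 1 := by
  rw [coeff_zero_eq_eval_zero, ← coe_evalRingHom, RingHom.map_det]
  convert det_one (n := ι) (R := R)
  ext i j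
  by_cases hij : i = j <;> simp [one_apply, hij]

lemma mapMatrix_coeToPowerSeries_one_sub_X_smul (N : Matrix ι ι R) :
    (coeToPowerSeries.ringHom : R[X] →+* R⟦X⟧).mapMatrix (1 - (X : R[X]) • N.map C) =
      1 - (PowerSeries.X : R⟦X⟧) • N.map PowerSeries.C := by
  ext i j : 1
  by_cases hij : i = j <;> simp [one_apply, hij, (PowerSeries.commute_X _).eq]

theorem det_mul_mk_matS_pow_eq_matS_adjugate (N : Matrix ι ι R) :
    ((1 - (X : R[X]) • N.map C).det : R⟦X⟧) * PowerSeries.mk (fun n => matS (N ^ n)) =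
      ((matS (1 - (X : R[X]) • N.map C).adjugate : R[X]) : R⟦X⟧) := by
  have h := adjugate_eq_det_smul_of_mul_eq_one (one_sub_X_smul_mul_matrixGeomSeries N)
  rw [← mapMatrix_coeToPowerSeries_one_sub_X_smul, ← RingHom.map_adjugate,
    ← RingHom.map_det] at h
  have h_matS := congrArg matS h
  rw [RingHom.mapMatrix_apply, ← map_matS, matS_smul, matS_matrixGeomSeries] at h_matS
  exact h_matS.symm

end PowerSeries

section NonIdentity

variable {𝒜 : Type*} [Category 𝒜]

def NonIdentity {x y : 𝒜} (f : x ⟶ y) : Prop := ¬ ∃ h : x = y, f = eqToHom h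

lemma nonIdentity_eqToHom_comp_iff {x x' y : 𝒜} (h : x' = x) (f : x ⟶ y) :
    NonIdentity (eqToHom h ≫ f) ↔ NonIdentity f := by
  subst h
  simp

lemma nonIdentity_comp_eqToHom_iff {x y y' : 𝒜} (f : x ⟶ y) (h : y = y') :
    NonIdentity (f ≫ eqToHom h) ↔ NonIdentity f := by
  subst h
  simp

lemma nonIdentity_iff_ne_id {x : 𝒜} (f : x ⟶ x) : NonIdentity f ↔ f ≠ 𝟙 x := by
  simp [NonIdentity]

lemma card_nonIdentity_add_ite [DecidableEq 𝒜] (x y : 𝒜) [Fintype (x ⟶ y)] :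
    Nat.card {f : x ⟶ y // NonIdentity f} + (if x = y then 1 else 0) =
      Fintype.card (x ⟶ y) := by
  classical
  split_ifs with h
  · subst h
    rw [Nat.card_congr (Equiv.subtypeEquivRight nonIdentity_iff_ne_id), Nat.card_eq_fintype_card,
      Fintype.card_subtype_compl, Fintype.card_subtype_eq]
    have := Fintype.card_pos_iff.2 ⟨𝟙 x⟩
    omega
  · rw [Nat.card_congr (Equiv.subtypeUnivEquiv fun _ ⟨hxy, _⟩ => h hxy :
        {f : x ⟶ y // NonIdentity f} ≃ _), Nat.card_eq_fintype_card, add_zero]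

noncomputable def nonIdentityCount (𝒜 : Type*) [Category 𝒜] : Matrix 𝒜 𝒜 ℕ :=
  of fun x y => Nat.card {f : x ⟶ y // NonIdentity f}

lemma nonIdentityCount_map_castRingHom {R : Type*} [Ring R] [DecidableEq 𝒜]
    [∀ x y : 𝒜, Fintype (x ⟶ y)] :
    (nonIdentityCount 𝒜).map (Nat.castRingHom R) =
      of (fun x y => (Fintype.card (x ⟶ y) : R)) - 1 := by
  ext x y
  rw [map_apply, Matrix.sub_apply, of_apply, one_apply, ← card_nonIdentity_add_ite x y]
  simp [nonIdentityCount]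

end NonIdentity

namespace NondegChain

variable {m : ℕ} [Category (Fin m)] {n : ℕ}

theorem ext {x y : Fin m} {c d : NondegChain m n x y} (h : c.obj = d.obj)
    (h' : ∀ k : Fin n, c.hom k ≍ d.hom k) : c = d := by
  obtain ⟨obj, hom, _, _, _⟩ := c
  obtain ⟨obj', hom', _, _, _⟩ := d
  obtain rfl : obj = obj' := h
  obtain rfl : hom = hom' := funext fun k => eq_of_heq (h' k)
  rfl

def nil (x : Fin m) : NondegChain m 0 x x where
  obj _ := x
  hom := Fin.elim0
  src := rfl
  tgt := rfl
  nondeg k := k.elim0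

lemma card_zero (x y : Fin m) : Nat.card (NondegChain m 0 x y) = if x = y then 1 else 0 := by
  split_ifs with h
  · subst h
    have : Unique (NondegChain m 0 x x) :=
      { default := nil x
        uniq c := ext (funext fun l => (congrArg c.obj (Fin.fin_one_eq_zero l)).trans c.src)
          fun k => k.elim0 }
    exact Nat.card_unique
  · have : IsEmpty (NondegChain m 0 x y) := ⟨fun c => h (c.src.symm.trans c.tgt)⟩
    exact Nat.card_of_isEmpty

-- `vecCons x d.obj` evaluates definitionally at `0` and at successors, so `d.hom` and
-- `d.nondeg` need no transport along `eqToHom`.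
def cons {x k y : Fin m} (f : x ⟶ k) (hf : NonIdentity f) (d : NondegChain m n k y) :
    NondegChain m (n + 1) x y where
  obj := vecCons x d.obj
  hom := Fin.cases (motive := fun l => vecCons x d.obj l.castSucc ⟶ vecCons x d.obj l.succ)
    (f ≫ eqToHom d.src.symm) d.hom
  src := rfl
  tgt := d.tgt
  nondeg := Fin.cases ((nonIdentity_comp_eqToHom_iff f _).2 hf) d.nondeg

lemma cons_hom_zero_heq {x k y : Fin m} {f : x ⟶ k} {hf : NonIdentity f}
    {d : NondegChain m n k y} : (cons f hf d).hom 0 ≍ f :=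
  comp_eqToHom_heq _ _

def headHom {x k y : Fin m} (c : NondegChain m (n + 1) x y) (hk : c.obj (Fin.succ 0) = k) :
    x ⟶ k :=
  eqToHom c.src.symm ≫ c.hom 0 ≫ eqToHom hk

lemma nonIdentity_headHom {x k y : Fin m} (c : NondegChain m (n + 1) x y)
    (hk : c.obj (Fin.succ 0) = k) : NonIdentity (c.headHom hk) :=
  (nonIdentity_eqToHom_comp_iff _ _).2 ((nonIdentity_comp_eqToHom_iff _ _).2 (c.nondeg 0))

lemma headHom_heq {x k y : Fin m} (c : NondegChain m (n + 1) x y)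
    (hk : c.obj (Fin.succ 0) = k) : c.headHom hk ≍ c.hom 0 :=
  (eqToHom_comp_heq _ _).trans (comp_eqToHom_heq _ _)

def tail {x k y : Fin m} (c : NondegChain m (n + 1) x y) (hk : c.obj (Fin.succ 0) = k) :
    NondegChain m n k y where
  obj l := c.obj l.succ
  hom l := c.hom l.succ
  src := hk
  tgt := c.tgt
  nondeg l := c.nondeg l.succ

def consEquiv (x k y : Fin m) :
    {c : NondegChain m (n + 1) x y // c.obj (Fin.succ 0) = k} ≃
      {f : x ⟶ k // NonIdentity f} × NondegChain m n k y where
  toFun c := (⟨c.1.headHom c.2, c.1.nonIdentity_headHom c.2⟩, c.1.tail c.2)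
  invFun p := ⟨cons p.1.1 p.1.2 p.2, p.2.src⟩
  left_inv c := by
    dsimp only
    refine Subtype.ext (ext (funext fun l => ?_) fun l => ?_)
    · induction l using Fin.cases
      · exact c.1.src.symm
      · rfl
    · induction l using Fin.cases
      · exact (cons_hom_zero_heq (hf := c.1.nonIdentity_headHom c.2)).trans (headHom_heq _ _)
      · rfl
  right_inv p := by
    dsimp only
    exact Prod.ext (Subtype.ext (eq_of_heq ((headHom_heq _ _).trans cons_hom_zero_heq))) rfl

variable [∀ x y : Fin m, Finite (x ⟶ y)]

instance {x y : Fin m} : Finite (NondegChain m n x y) :=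
  Finite.of_injective (fun c => (⟨c.obj, c.hom⟩ : Σ o : Fin (n + 1) → Fin m,
      ∀ k : Fin n, o k.castSucc ⟶ o k.succ))
    fun _ _ h => ext (congrArg Sigma.fst h) fun k => congr_arg_heq (fun s => s.2 k) h

lemma card_succ (x y : Fin m) :
    Nat.card (NondegChain m (n + 1) x y) =
      ∑ k, Nat.card {f : x ⟶ k // NonIdentity f} * Nat.card (NondegChain m n k y) := by
  rw [← Nat.card_congr (Equiv.sigmaFiberEquiv fun c : NondegChain m (n + 1) x y =>
    c.obj (Fin.succ 0)), Nat.card_sigma]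
  exact Finset.sum_congr rfl fun k _ => by rw [Nat.card_congr (consEquiv x k y), Nat.card_prod]

end NondegChain

lemma nonIdentityCount_pow_apply {m : ℕ} [Category (Fin m)] [∀ x y : Fin m, Finite (x ⟶ y)]
    (n : ℕ) (x y : Fin m) :
    (nonIdentityCount (Fin m) ^ n) x y = Nat.card (NondegChain m n x y) := by
  induction n generalizing x with
  | zero => rw [pow_zero, one_apply, NondegChain.card_zero]
  | succ n ih =>
    rw [pow_succ', mul_apply, NondegChain.card_succ]
    simp only [ih]
    rfl

lemma natCast_card_nondegChain_eq_pow_apply {m : ℕ} [Category (Fin m)]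
    [∀ x y : Fin m, Fintype (x ⟶ y)] {R : Type*} [Ring R] (n : ℕ) (x y : Fin m) :
    (Nat.card (NondegChain m n x y) : R) =
      (((of fun i j => (Fintype.card (i ⟶ j) : R)) - 1 : Matrix (Fin m) (Fin m) R) ^ n) x y := by
  rw [← nonIdentityCount_map_castRingHom, ← Matrix.map_pow, map_apply,
    nonIdentityCount_pow_apply, Nat.coe_castRingHom]

theorem stmt2 (m : ℕ) [Category (Fin m)] [∀ i j : Fin m, Fintype (i ⟶ j)] :
    let Z : Matrix (Fin m) (Fin m) ℚ := Matrix.of fun i j => (Fintype.card (i ⟶ j) : ℚ)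
    let c : ℕ → ℕ := fun n => ∑ i : Fin m, ∑ j : Fin m, Nat.card (NondegChain m n i j)
    let fA : PowerSeries ℚ := PowerSeries.mk fun n => (c n : ℚ)
    let D : ℚ[X] :=
      ((1 : Matrix (Fin m) (Fin m) ℚ[X]) - (X : ℚ[X]) • (Z - 1).map C).det
    ((D : PowerSeries ℚ) * fA =
      ((matS (((1 : Matrix (Fin m) (Fin m) ℚ[X]) - (X : ℚ[X]) • (Z - 1).map C).adjugate) :
        ℚ[X]) : PowerSeries ℚ)) ∧
    D.coeff 0 = 1 ∧ D ≠ 0 := by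
  intro Z c fA D
  have hfA : fA = PowerSeries.mk fun n => matS ((Z - 1) ^ n) := by
    ext n
    simp only [fA, c, Z, PowerSeries.coeff_mk, matS, Nat.cast_sum,
      natCast_card_nondegChain_eq_pow_apply]
  have hD : D.coeff 0 = 1 := coeff_zero_det_one_sub_X_smul _
  exact ⟨hfA ▸ det_mul_mk_matS_pow_eq_matS_adjugate (Z - 1), hD, fun h => by simp [h] at hD⟩
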